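/- arXiv:2003.05271 — 2 statements merged into one kernel-verified Lean document; each statement's English description precedes it below -/
import Mathlib

section
/- Lemma (Söderlind-type bound): If x : [t₀, t₁] → ℝⁿ is differentiable and satisfies dx/dt = A(t)ᵀ x(t) + b(t) with x(t₀) = x₀, and ξ : [t₀, t₁] → ℝ satisfies dξ/dt = μ[A(t)ᵀ]·ξ(t) + ‖b(t)‖ with ξ(t₀) = ‖x₀‖, where μ is the 2-norm logarithmic norm, then ‖x(t)‖ ≤ ξ(t) for all t ∈ [t₀, t₁]. -/
/-! Along the solution, the right Dini derivative of `‖x‖` is at most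
`⟪x, A(t)ᵀx + b⟫ / ‖x‖ ≤ μ[A(t)ᵀ] ‖x‖ + ‖b‖` (and at most `‖x'‖ = ‖b‖` where `x = 0`): the quadratic
form of a matrix only sees its symmetric part, whose Rayleigh quotient is bounded by its largest
eigenvalue. Hence `‖x‖` is a subsolution of the scalar linear equation solved by `ξ`, and the
comparison principle for right Dini derivatives gives `‖x‖ ≤ ξ`. -/

open Matrix Filter Set Topology intervalIntegral

theorem symPart_isHermitian {n : ℕ} (A : Matrix (Fin n) (Fin n) ℝ) :
    ((2:ℝ)⁻¹ • (A + Aᵀ)).IsHermitian := by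
  unfold Matrix.IsHermitian
  rw [conjTranspose_smul]
  simp [Matrix.IsHermitian, conjTranspose_eq_transpose_of_trivial, transpose_add, add_comm]

/-- The 2-norm logarithmic norm `μ₂[A] = λ_max((A + Aᵀ)/2)`. -/
noncomputable def mu2 {n : ℕ} (A : Matrix (Fin n) (Fin n) ℝ) : ℝ :=
  ⨆ i, (symPart_isHermitian A).eigenvalues i

open scoped RealInnerProductSpace

namespace Matrix

variable {n : Type*} [Fintype n] [DecidableEq n]

theorem IsHermitian.toEuclideanCLM_eigenvectorBasis {S : Matrix n n ℝ} (hS : S.IsHermitian)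
    (i : n) :
    toEuclideanCLM (𝕜 := ℝ) S (hS.eigenvectorBasis i) =
      hS.eigenvalues i • hS.eigenvectorBasis i := by
  ext j
  exact congrFun (hS.mulVec_eigenvectorBasis i) j

theorem IsHermitian.inner_toEuclideanCLM_self_le {S : Matrix n n ℝ} (hS : S.IsHermitian)
    (y : EuclideanSpace ℝ n) :
    ⟪y, toEuclideanCLM (𝕜 := ℝ) S y⟫ ≤ (⨆ i, hS.eigenvalues i) * ‖y‖ ^ 2 := by
  set v := hS.eigenvectorBasis
  have hsymm (u w : EuclideanSpace ℝ n) :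
      ⟪toEuclideanCLM (𝕜 := ℝ) S u, w⟫ = ⟪u, toEuclideanCLM (𝕜 := ℝ) S w⟫ :=
    isSymmetric_toEuclideanLin_iff.2 hS u w
  have hexpand : ⟪y, toEuclideanCLM (𝕜 := ℝ) S y⟫ = ∑ i, hS.eigenvalues i * ⟪v i, y⟫ ^ 2 := by
    rw [← v.sum_inner_mul_inner]
    refine Finset.sum_congr rfl fun i _ => ?_
    rw [← hsymm, hS.toEuclideanCLM_eigenvectorBasis, real_inner_smul_left, real_inner_comm y]
    ring
  have hparseval : ‖y‖ ^ 2 = ∑ i, ⟪v i, y⟫ ^ 2 := by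
    rw [← real_inner_self_eq_norm_sq, ← v.sum_inner_mul_inner]
    simp_rw [real_inner_comm y, sq]
  rw [hexpand, hparseval, Finset.mul_sum]
  gcongr with i
  exact le_ciSup (Set.finite_range _).bddAbove i

theorem inner_toEuclideanCLM_symPart (M : Matrix n n ℝ) (y : EuclideanSpace ℝ n) :
    ⟪y, toEuclideanCLM (𝕜 := ℝ) ((2 : ℝ)⁻¹ • (M + Mᵀ)) y⟫ = ⟪y, toEuclideanCLM (𝕜 := ℝ) M y⟫ := by
  simp only [Matrix.inner_toEuclideanCLM, smul_mulVec, add_mulVec, dotProduct_smul, dotProduct_add,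
    mulVec_transpose, dotProduct_comm _ (vecMul _ _), ← dotProduct_mulVec, smul_eq_mul]
  ring

end Matrix

section LogNorm

variable {d : ℕ}

theorem inner_toEuclideanCLM_self_le_mu2 (M : Matrix (Fin d) (Fin d) ℝ)
    (y : EuclideanSpace ℝ (Fin d)) :
    ⟪y, toEuclideanCLM (𝕜 := ℝ) M y⟫ ≤ mu2 M * ‖y‖ ^ 2 := by
  rw [← inner_toEuclideanCLM_symPart]
  exact (symPart_isHermitian M).inner_toEuclideanCLM_self_le y

theorem mu2_le_norm_toEuclideanCLM (M : Matrix (Fin d) (Fin d) ℝ) :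
    mu2 M ≤ ‖toEuclideanCLM (𝕜 := ℝ) M‖ := by
  refine Real.iSup_le (fun i => ?_) (norm_nonneg _)
  set hS := symPart_isHermitian M
  set v := hS.eigenvectorBasis i
  have hv : ‖v‖ = 1 := hS.eigenvectorBasis.orthonormal.1 i
  calc hS.eigenvalues i = ⟪v, toEuclideanCLM (𝕜 := ℝ) ((2 : ℝ)⁻¹ • (M + Mᵀ)) v⟫ := by
        rw [hS.toEuclideanCLM_eigenvectorBasis, real_inner_smul_right, real_inner_self_eq_norm_sq,
          hv, one_pow, mul_one]
    _ = ⟪v, toEuclideanCLM (𝕜 := ℝ) M v⟫ := inner_toEuclideanCLM_symPart M v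
    _ ≤ ‖v‖ * ‖toEuclideanCLM (𝕜 := ℝ) M v‖ := real_inner_le_norm _ _
    _ ≤ ‖toEuclideanCLM (𝕜 := ℝ) M‖ := by
        simpa [hv] using (toEuclideanCLM (𝕜 := ℝ) M).le_opNorm v

theorem IsCompact.bddAbove_image_mu2 {X : Type*} [TopologicalSpace X] {s : Set X}
    {A : X → Matrix (Fin d) (Fin d) ℝ} (hs : IsCompact s) (hA : ContinuousOn A s) :
    BddAbove ((fun t => mu2 (A t)) '' s) := by
  have hcont : Continuous (toEuclideanCLM (n := Fin d) (𝕜 := ℝ)) :=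
    (toEuclideanCLM (n := Fin d) (𝕜 := ℝ)).toAlgEquiv.toLinearMap.continuous_of_finiteDimensional
  obtain ⟨C, hC⟩ := hs.bddAbove_image (f := fun t => ‖toEuclideanCLM (𝕜 := ℝ) (A t)‖)
    ((continuous_norm.comp hcont).comp_continuousOn hA)
  exact ⟨C, forall_mem_image.2 fun t ht =>
    (mu2_le_norm_toEuclideanCLM _).trans (hC (mem_image_of_mem _ ht))⟩

end LogNorm

section NormDeriv

variable {F : Type*} [NormedAddCommGroup F] [InnerProductSpace ℝ F] {x : ℝ → F} {v : F}
  {s : Set ℝ} {t r : ℝ}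

theorem HasDerivWithinAt.norm (hx : HasDerivWithinAt x v s t) (h0 : x t ≠ 0) :
    HasDerivWithinAt (fun z => ‖x z‖) (⟪x t, v⟫ / ‖x t‖) s t := by
  have hpos : 0 < ‖x t‖ := norm_pos_iff.2 h0
  have hsqrt := hx.norm_sq.sqrt (by positivity)
  simp only [Real.sqrt_sq (norm_nonneg _)] at hsqrt
  convert hsqrt using 1
  field_simp

theorem frequently_slope_norm_lt (hx : HasDerivWithinAt x v (Ici t) t)
    (hr₀ : x t = 0 → ‖v‖ < r) (hr : x t ≠ 0 → ⟪x t, v⟫ < r * ‖x t‖) :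
    ∃ᶠ z in 𝓝[>] t, slope (fun z => ‖x z‖) t z < r := by
  by_cases h0 : x t = 0
  · simpa only [slope_def_field, div_eq_inv_mul] using hx.liminf_right_slope_norm_le (hr₀ h0)
  · have hslope : Tendsto (slope (fun z => ‖x z‖) t) (𝓝[>] t) (𝓝 (⟪x t, v⟫ / ‖x t‖)) :=
      (hasDerivWithinAt_iff_tendsto_slope' (lt_irrefl t)).1 (hx.norm h0).Ioi_of_Ici
    exact (hslope.eventually_lt_const ((div_lt_iff₀ (norm_pos_iff.2 h0)).2 (hr h0))).frequently

end NormDeriv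

theorem frequently_slope_norm_lt_of_linear_deriv {d : ℕ} {M : Matrix (Fin d) (Fin d) ℝ}
    {x : ℝ → EuclideanSpace ℝ (Fin d)} {c : EuclideanSpace ℝ (Fin d)} {t r : ℝ}
    (hx : HasDerivWithinAt x (toEuclideanCLM (𝕜 := ℝ) M (x t) + c) (Ici t) t)
    (hr : mu2 M * ‖x t‖ + ‖c‖ < r) :
    ∃ᶠ z in 𝓝[>] t, slope (fun z => ‖x z‖) t z < r := by
  refine frequently_slope_norm_lt hx (fun h0 => by simpa [h0] using hr) fun h0 => ?_
  calc ⟪x t, toEuclideanCLM (𝕜 := ℝ) M (x t) + c⟫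
      = ⟪x t, toEuclideanCLM (𝕜 := ℝ) M (x t)⟫ + ⟪x t, c⟫ := inner_add_right _ _ _
    _ ≤ mu2 M * ‖x t‖ ^ 2 + ‖x t‖ * ‖c‖ :=
        add_le_add (inner_toEuclideanCLM_self_le_mu2 _ _) (real_inner_le_norm _ _)
    _ = (mu2 M * ‖x t‖ + ‖c‖) * ‖x t‖ := by ring
    _ < r * ‖x t‖ := mul_lt_mul_of_pos_right hr (norm_pos_iff.2 h0)

theorem image_le_of_liminf_slope_right_lt_linear_boundary {f ξ m β : ℝ → ℝ} {a b : ℝ}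
    (hf : ContinuousOn f (Icc a b))
    (hf' : ∀ t ∈ Ico a b, ∀ r, m t * f t + β t < r → ∃ᶠ z in 𝓝[>] t, slope f t z < r)
    (hm : BddAbove (m '' Ico a b)) (ha : f a ≤ ξ a) (hξ : ContinuousOn ξ (Icc a b))
    (hξ' : ∀ t ∈ Ico a b, HasDerivWithinAt ξ (m t * ξ t + β t) (Ici t) t) :
    ∀ ⦃t⦄, t ∈ Icc a b → f t ≤ ξ t := by
  obtain ⟨L, hL⟩ := hm
  set e : ℝ → ℝ := fun t => Real.exp ((L + 1) * (t - a))
  have he : Continuous e := by fun_prop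
  have he' (t : ℝ) : HasDerivAt e ((L + 1) * e t) t := by
    simpa [e, mul_comm] using (((hasDerivAt_id t).sub_const a).const_mul (L + 1)).exp
  -- `ξ + ε e` is a strict upper solution since `e` grows faster than the rate `m ≤ L` allows
  have hperturbed : ∀ ε > 0, ∀ t ∈ Icc a b, f t ≤ ξ t + ε * e t := by
    intro ε hε
    have hstart : f a ≤ ξ a + ε * e a := by
      simpa [e] using ha.trans (le_add_of_nonneg_right hε.le)
    refine image_le_of_liminf_slope_right_lt_deriv_boundary' hf hf' hstart
      (hξ.add (continuous_const.mul he).continuousOn)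
      (fun t ht => (hξ' t ht).add ((he' t).const_mul ε).hasDerivWithinAt) fun t ht hft => ?_
    have hmL : m t < L + 1 := (hL (mem_image_of_mem m ht)).trans_lt (lt_add_one L)
    have hεe : 0 < ε * e t := mul_pos hε (Real.exp_pos _)
    rw [hft]
    nlinarith
  intro t ht
  refine le_of_forall_pos_le_add fun δ hδ => ?_
  have het : 0 < e t := Real.exp_pos _
  simpa [div_mul_cancel₀ _ het.ne'] using hperturbed (δ / e t) (div_pos hδ het) t ht

theorem norm_le_of_soderlind_general {d : ℕ} (t₀ t₁ : ℝ)
    (A : ℝ → Matrix (Fin d) (Fin d) ℝ) (b : ℝ → EuclideanSpace ℝ (Fin d))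
    (x : ℝ → EuclideanSpace ℝ (Fin d)) (ξ : ℝ → ℝ) (x₀ : EuclideanSpace ℝ (Fin d))
    (hA : ContinuousOn A (Icc t₀ t₁))
    (hx : ∀ t ∈ Icc t₀ t₁,
      HasDerivAt x (Matrix.toEuclideanCLM (𝕜 := ℝ) (A t)ᵀ (x t) + b t) t)
    (hx0 : x t₀ = x₀)
    (hξ : ∀ t ∈ Icc t₀ t₁, HasDerivAt ξ (mu2 (A t)ᵀ * ξ t + ‖b t‖) t)
    (hξ0 : ξ t₀ = ‖x₀‖) :
    ∀ t ∈ Icc t₀ t₁, ‖x t‖ ≤ ξ t := by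
  have hmu : BddAbove ((fun t => mu2 (A t)ᵀ) '' Icc t₀ t₁) :=
    isCompact_Icc.bddAbove_image_mu2 (continuous_id.matrix_transpose.comp_continuousOn hA)
  intro t ht
  exact image_le_of_liminf_slope_right_lt_linear_boundary (β := fun t => ‖b t‖)
    (fun t ht => (hx t ht).continuousAt.continuousWithinAt.norm)
    (fun t ht _ hr =>
      frequently_slope_norm_lt_of_linear_deriv (hx t (Ico_subset_Icc_self ht)).hasDerivWithinAt hr)
    (hmu.mono (image_mono Ico_subset_Icc_self)) (by rw [hx0, hξ0])
    (fun t ht => (hξ t ht).continuousAt.continuousWithinAt)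
    (fun t ht => (hξ t (Ico_subset_Icc_self ht)).hasDerivWithinAt) ht

/-- Söderlind-type bound: if `x` solves `dx/dt = A(t)ᵀ x(t) + b(t)` with
`x(t₀) = x₀` and `ξ` solves the scalar IVP `dξ/dt = μ[A(t)ᵀ] ξ + ‖b(t)‖` with
`ξ(t₀) = ‖x₀‖`, then `‖x(t)‖ ≤ ξ(t)` on `[t₀, t₁]`. -/
theorem norm_le_of_soderlind {d : ℕ} (t₀ t₁ : ℝ) (ht : t₀ ≤ t₁)
    (A : ℝ → Matrix (Fin d) (Fin d) ℝ) (b : ℝ → EuclideanSpace ℝ (Fin d))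
    (x : ℝ → EuclideanSpace ℝ (Fin d)) (ξ : ℝ → ℝ) (x₀ : EuclideanSpace ℝ (Fin d))
    (hA : ContinuousOn A (Icc t₀ t₁)) (hb : ContinuousOn b (Icc t₀ t₁))
    (hx : ∀ t ∈ Icc t₀ t₁,
      HasDerivAt x (Matrix.toEuclideanCLM (𝕜 := ℝ) (A t)ᵀ (x t) + b t) t)
    (hx0 : x t₀ = x₀)
    (hξ : ∀ t ∈ Icc t₀ t₁, HasDerivAt ξ (mu2 (A t)ᵀ * ξ t + ‖b t‖) t)
    (hξ0 : ξ t₀ = ‖x₀‖) :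
    ∀ t ∈ Icc t₀ t₁, ‖x t‖ ≤ ξ t :=
  norm_le_of_soderlind_general t₀ t₁ A b x ξ x₀ hA hx hx0 hξ hξ0
end

section
/- The barycentric weights for Chebyshev points of the first kind, τ_n = cos((2n+1)π/(2N+2)) for n = 0,…,N, are proportional to w_n = (-1)ⁿ · sin((2n+1)π/(2N+2)); i.e., the standard barycentric weight ∏_{k≠n} (τ_n - τ_k)⁻¹ equals c_N · (-1)ⁿ sin((2n+1)π/(2N+2)) for a constant c_N independent of n. -/
/-!
The Chebyshev points `τ_k = cos θ_k` are the `N + 1` distinct roots of `T_{N+1}`, whose leading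
coefficient is `2 ^ N`, so `T_{N+1} = 2 ^ N ∏_k (X - τ_k)`. Differentiating at a node gives
`∏_{k ≠ n} (τ_n - τ_k) = T'_{N+1}(τ_n) / 2 ^ N`, and `T'_{N+1}(cos θ) sin θ = (N + 1) sin((N + 1) θ)`,
which equals `(N + 1) (-1)ⁿ` at `θ = θ_n`.
-/

open Set Real Finset Polynomial Polynomial.Chebyshev

theorem Polynomial.Chebyshev.eval_derivative_T_real_cos_mul_sin (n : ℤ) (θ : ℝ) :
    (derivative (T ℝ n)).eval (cos θ) * sin θ = n * sin (n * θ) := by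
  rw [T_derivative_eq_U, eval_mul, eval_intCast, mul_assoc, U_real_cos]
  push_cast
  ring_nf

noncomputable def chebyshevAngle (N : ℕ) (k : Fin (N + 1)) : ℝ :=
  (2 * (k : ℕ) + 1) * π / (2 * N + 2)

namespace chebyshevAngle

variable {N : ℕ}

theorem mem_Ioo (k : Fin (N + 1)) : chebyshevAngle N k ∈ Ioo 0 π := by
  have hk : ((k : ℕ) : ℝ) + 1 ≤ N + 1 := by exact_mod_cast k.isLt
  constructor
  · unfold chebyshevAngle; positivity
  · rw [chebyshevAngle, div_lt_iff₀ (by positivity)]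
    nlinarith [pi_pos]

theorem succ_mul (k : Fin (N + 1)) :
    ((N : ℝ) + 1) * chebyshevAngle N k = k * π + π / 2 := by
  unfold chebyshevAngle
  field_simp

theorem cos_succ_mul (k : Fin (N + 1)) : cos (((N : ℝ) + 1) * chebyshevAngle N k) = 0 := by
  rw [succ_mul, cos_add_pi_div_two, sin_nat_mul_pi, neg_zero]

theorem sin_succ_mul (k : Fin (N + 1)) :
    sin (((N : ℝ) + 1) * chebyshevAngle N k) = (-1) ^ (k : ℕ) := by
  rw [succ_mul, sin_add_pi_div_two, cos_nat_mul_pi]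

theorem injective_cos : Function.Injective fun k => cos (chebyshevAngle N k) := by
  intro a b hab
  have hθ := injOn_cos (Ioo_subset_Icc_self (mem_Ioo a)) (Ioo_subset_Icc_self (mem_Ioo b)) hab
  have hab : ((a : ℕ) : ℝ) = b := by
    have := congrArg (fun x => ((N : ℝ) + 1) * x) hθ
    simp only [succ_mul] at this
    nlinarith [pi_pos]
  exact Fin.ext (by exact_mod_cast hab)

end chebyshevAngle

open Lagrange

theorem Polynomial.Chebyshev.T_real_eq_C_mul_nodal (N : ℕ) :
    T ℝ (N + 1) = Polynomial.C (2 ^ N) * nodal univ fun k => cos (chebyshevAngle N k) := by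
  have hdeg : (T ℝ (N + 1)).degree = (N + 1 : ℕ) := by
    rw [degree_T]; norm_cast
  refine eq_of_degree_le_of_eval_index_eq (univ : Finset (Fin (N + 1)))
    chebyshevAngle.injective_cos.injOn (by simp [hdeg]) ?_ ?_ ?_
  · rw [degree_C_mul (by positivity), degree_nodal, hdeg, card_univ, Fintype.card_fin]
  · rw [leadingCoeff_mul, leadingCoeff_C, nodal_monic, leadingCoeff_T, mul_one]
    norm_cast
  · intro k _
    rw [eval_C_mul, eval_nodal_at_node (v := fun k => cos (chebyshevAngle N k)) (mem_univ k),
      T_real_cos]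
    push_cast
    rw [chebyshevAngle.cos_succ_mul, mul_zero]

theorem prod_erase_sub_cos_chebyshevAngle (N : ℕ) (n : Fin (N + 1)) :
    ∏ k ∈ univ.erase n, (cos (chebyshevAngle N n) - cos (chebyshevAngle N k)) =
      (N + 1) * (-1) ^ (n : ℕ) / (2 ^ N * sin (chebyshevAngle N n)) := by
  have hsin : sin (chebyshevAngle N n) ≠ 0 := (sin_pos_of_mem_Ioo (chebyshevAngle.mem_Ioo n)).ne'
  have hT := eval_derivative_T_real_cos_mul_sin (N + 1) (chebyshevAngle N n)
  rw [T_real_eq_C_mul_nodal, derivative_C_mul, eval_C_mul,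
    eval_nodal_derivative_eval_node_eq (v := fun k => cos (chebyshevAngle N k)) (mem_univ n),
    eval_nodal] at hT
  push_cast at hT
  rw [chebyshevAngle.sin_succ_mul] at hT
  rw [eq_div_iff (mul_ne_zero (by positivity) hsin)]
  linear_combination hT

/-- The barycentric weights for Chebyshev points of the first kind
`τ_n = cos((2n+1)π/(2N+2))` are proportional to
`w_n = (-1)ⁿ sin((2n+1)π/(2N+2))`: the standard barycentric weight
`λ_n = ∏_{k≠n} (τ_n - τ_k)⁻¹` equals `c_N · w_n` for a constant `c_N`
independent of `n`. -/
theorem chebyshev_barycentric_weights (N : ℕ) :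
    ∃ c : ℝ, ∀ n : Fin (N + 1),
      (∏ k ∈ Finset.univ.erase n,
          (Real.cos ((2 * (n : ℕ) + 1) * Real.pi / (2 * N + 2)) -
            Real.cos ((2 * (k : ℕ) + 1) * Real.pi / (2 * N + 2))))⁻¹ =
        c * ((-1) ^ (n : ℕ) * Real.sin ((2 * (n : ℕ) + 1) * Real.pi / (2 * N + 2))) := by
  refine ⟨2 ^ N / (N + 1), fun n => ?_⟩
  change (∏ k ∈ univ.erase n, (cos (chebyshevAngle N n) - cos (chebyshevAngle N k)))⁻¹ =
    _ * ((-1) ^ (n : ℕ) * sin (chebyshevAngle N n))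
  rw [prod_erase_sub_cos_chebyshevAngle, inv_div]
  field_simp
  rw [← pow_mul, pow_mul', neg_one_sq, one_pow, mul_one]
end
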